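/- arXiv:1106.2139 — 2 statements merged into one kernel-verified Lean document; each statement's English description precedes it below -/
import Mathlib

section
/- Suppose the multiplier M_{m,Λ,Θ} is well defined and invertible on H, m ∈ ℓ^∞, and Θ = {Θ_i} is a g-Bessel sequence. Then Λ = {Λ_i} satisfies the lower g-frame condition: there exists A > 0 such that ∑_{i∈J} ‖Λ_i f‖² ≥ A‖f‖² for all f ∈ H. -/
open ContinuousLinearMap
local notation "⟪" x ", " y "⟫" => @inner ℂ _ _ x y

/-!
For `g : H` put `f = Minv g`, so that `‖g‖² = ⟪g, M f⟫ = ∑ mᵢ ⟪Λᵢ g, Θᵢ f⟫`. Cauchy–Schwarz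
for the series and the Bessel bound of `Θ` give
`‖g‖² ≤ |mB| · (∑ ‖Λᵢ g‖²)^½ · √BΘ ‖Minv‖ ‖g‖`, hence `‖g‖² ≤ mB² BΘ ‖Minv‖² ∑ ‖Λᵢ g‖²`.
-/

theorem Real.exists_hasSum_mul_le_sqrt_mul_sqrt {ι : Type*} {a b : ι → ℝ} {s t : ℝ}
    (ha : ∀ i, 0 ≤ a i) (hb : ∀ i, 0 ≤ b i)
    (hs : HasSum (fun i => a i ^ 2) s) (ht : HasSum (fun i => b i ^ 2) t) :
    ∃ c ≤ √s * √t, HasSum (fun i => a i * b i) c := by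
  have hs0 : 0 ≤ s := hs.nonneg fun i => sq_nonneg _
  have ht0 : 0 ≤ t := ht.nonneg fun i => sq_nonneg _
  have hs' : HasSum (fun i => a i ^ (2 : ℝ)) (√s ^ (2 : ℝ)) := by
    simpa only [Real.rpow_two, Real.sq_sqrt hs0] using hs
  have ht' : HasSum (fun i => b i ^ (2 : ℝ)) (√t ^ (2 : ℝ)) := by
    simpa only [Real.rpow_two, Real.sq_sqrt ht0] using ht
  obtain ⟨c, -, hc, hab⟩ := Real.inner_le_Lp_mul_Lq_hasSum_of_nonneg .two_two
    (Real.sqrt_nonneg s) (Real.sqrt_nonneg t) ha hb hs' ht'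
  exact ⟨c, hc, hab⟩

theorem ENNReal.ofReal_le_tsum_ofReal {ι : Type*} {a : ι → ℝ} {c : ℝ} (ha : ∀ i, 0 ≤ a i)
    (h : Summable a → c ≤ ∑' i, a i) :
    ENNReal.ofReal c ≤ ∑' i, ENNReal.ofReal (a i) := by
  by_cases htop : ∑' i, ENNReal.ofReal (a i) = ⊤
  · exact htop ▸ le_top
  have hsum : Summable a := by
    simpa only [ENNReal.toReal_ofReal (ha _)] using ENNReal.summable_toReal htop
  rw [← ENNReal.ofReal_tsum_of_nonneg ha hsum]
  exact ENNReal.ofReal_le_ofReal (h hsum)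

theorem Real.sqrt_le_sqrt_max_mul {t B x : ℝ} (hx : 0 ≤ x) (h : t ≤ B * x ^ 2) :
    √t ≤ √(max B 0) * x := by
  calc √t ≤ √(max B 0 * x ^ 2) := Real.sqrt_le_sqrt (h.trans (by gcongr; exact le_max_left _ _))
    _ = √(max B 0) * x := by rw [Real.sqrt_mul (le_max_right _ _), Real.sqrt_sq hx]

section Multiplier

variable {H : Type*} [NormedAddCommGroup H] [InnerProductSpace ℂ H] [CompleteSpace H]
    {J : Type*} {Hi : J → Type*} [∀ i, NormedAddCommGroup (Hi i)]
    [∀ i, InnerProductSpace ℂ (Hi i)] [∀ i, CompleteSpace (Hi i)]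
    {Λ Θ : ∀ i, H →L[ℂ] Hi i} {m : J → ℂ} {f h : H}

theorem hasSum_inner_multiplier (hM : HasSum (fun i => m i • adjoint (Λ i) (Θ i f)) h) (g : H) :
    HasSum (fun i => m i * ⟪Λ i g, Θ i f⟫) ⟪g, h⟫ := by
  simpa only [innerSL_apply_apply, inner_smul_right, adjoint_inner_right]
    using hM.mapL (innerSL ℂ g)

theorem norm_inner_multiplier_le {C s t : ℝ} (hC : 0 ≤ C) (hm : ∀ i, ‖m i‖ ≤ C)
    (hM : HasSum (fun i => m i • adjoint (Λ i) (Θ i f)) h) {g : H}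
    (hs : HasSum (fun i => ‖Λ i g‖ ^ 2) s) (ht : HasSum (fun i => ‖Θ i f‖ ^ 2) t) :
    ‖⟪g, h⟫‖ ≤ C * (√s * √t) := by
  obtain ⟨c, hc, hsum⟩ := Real.exists_hasSum_mul_le_sqrt_mul_sqrt
    (fun i => norm_nonneg _) (fun i => norm_nonneg _) hs ht
  have hterm : ∀ i, ‖m i * ⟪Λ i g, Θ i f⟫‖ ≤ C * (‖Λ i g‖ * ‖Θ i f‖) := fun i => by
    rw [norm_mul]
    exact mul_le_mul (hm i) (norm_inner_le_norm _ _) (norm_nonneg _) hC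
  calc ‖⟪g, h⟫‖ ≤ C * c := (hasSum_inner_multiplier hM g).norm_le_of_bounded (hsum.mul_left C) hterm
    _ ≤ C * (√s * √t) := mul_le_mul_of_nonneg_left hc hC

theorem norm_le_of_hasSum_multiplier {C K s t : ℝ} (hC : 0 ≤ C) (hK : 0 ≤ K)
    (hm : ∀ i, ‖m i‖ ≤ C) (hM : HasSum (fun i => m i • adjoint (Λ i) (Θ i f)) h)
    (hs : HasSum (fun i => ‖Λ i h‖ ^ 2) s) (ht : HasSum (fun i => ‖Θ i f‖ ^ 2) t)
    (htK : √t ≤ K * ‖h‖) :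
    ‖h‖ ≤ C * K * √s := by
  have hh : ‖h‖ ^ 2 ≤ C * K * √s * ‖h‖ :=
    calc ‖h‖ ^ 2 = ‖⟪h, h⟫‖ := by simp [inner_self_eq_norm_sq_to_K]
      _ ≤ C * (√s * √t) := norm_inner_multiplier_le hC hm hM hs ht
      _ ≤ C * (√s * (K * ‖h‖)) := by gcongr
      _ = C * K * √s * ‖h‖ := by ring
  nlinarith [norm_nonneg h, show 0 ≤ C * K * √s by positivity]

end Multiplier

theorem stmt4 {H : Type*} [NormedAddCommGroup H] [InnerProductSpace ℂ H] [CompleteSpace H]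
    {J : Type*} {Hi : J → Type*} [∀ i, NormedAddCommGroup (Hi i)]
    [∀ i, InnerProductSpace ℂ (Hi i)] [∀ i, CompleteSpace (Hi i)]
    (Λ Θ : ∀ i, H →L[ℂ] Hi i) (m : J → ℂ) (mB : ℝ) (hm : ∀ i, ‖m i‖ ≤ mB)
    (BΘ : ℝ)
    (hΘ : ∀ f : H, ∃ s : ℝ, HasSum (fun i => ‖Θ i f‖ ^ 2) s ∧ s ≤ BΘ * ‖f‖ ^ 2)
    (M Minv : H →L[ℂ] H)
    (hM : ∀ f : H, HasSum (fun i => m i • adjoint (Λ i) (Θ i f)) (M f))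
    (hinv : M * Minv = 1 ∧ Minv * M = 1) :
    ∃ A : ℝ, 0 < A ∧ ∀ f : H,
      ENNReal.ofReal (A * ‖f‖ ^ 2) ≤ ∑' i, ENNReal.ofReal (‖Λ i f‖ ^ 2) := by
  set K := √(max BΘ 0) * ‖Minv‖
  -- `(|mB| * K) ^ 2 + 1` rather than `(|mB| * K) ^ 2`, which vanishes when `H` is trivial
  refine ⟨1 / ((|mB| * K) ^ 2 + 1), by positivity, fun g => ?_⟩
  refine ENNReal.ofReal_le_tsum_ofReal (fun i => sq_nonneg _) fun hΛ => ?_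
  obtain ⟨t, ht, htB⟩ := hΘ (Minv g)
  have hMg := hM (Minv g)
  rw [show M (Minv g) = g from DFunLike.congr_fun hinv.1 g] at hMg
  have hBessel : √t ≤ K * ‖g‖ :=
    calc √t ≤ √(max BΘ 0) * ‖Minv g‖ := Real.sqrt_le_sqrt_max_mul (norm_nonneg _) htB
      _ ≤ K * ‖g‖ := by rw [mul_assoc]; gcongr; exact Minv.le_opNorm g
  have hg : ‖g‖ ≤ |mB| * K * √(∑' i, ‖Λ i g‖ ^ 2) :=
    norm_le_of_hasSum_multiplier (abs_nonneg mB) (by positivity)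
      (fun i => (hm i).trans (le_abs_self mB)) hMg hΛ.hasSum ht hBessel
  have hs : 0 ≤ ∑' i, ‖Λ i g‖ ^ 2 := tsum_nonneg fun i => sq_nonneg _
  have hg_sq : ‖g‖ ^ 2 ≤ (|mB| * K) ^ 2 * ∑' i, ‖Λ i g‖ ^ 2 := by
    simpa only [mul_pow, Real.sq_sqrt hs] using pow_le_pow_left₀ (norm_nonneg g) hg 2
  rw [one_div_mul_eq_div, div_le_iff₀ (by positivity)]
  nlinarith
end

section
/- Let Λ be a g-frame for H with bounds A_Λ, B_Λ, and suppose there exists μ ∈ [0, A_Λ²/B_Λ) such that ∑_i ‖(m_i Θ_i − Λ_i)f‖² ≤ μ‖f‖² for all f ∈ H. Then mΘ = {m_i Θ_i} is a g-frame for H, the multiplier M_{m,Λ,Θ} is invertible on H, and ‖h‖/(B_Λ + √(μ B_Λ)) ≤ ‖M_{m,Λ,Θ}^{-1} h‖ ≤ ‖h‖/(A_Λ − √(μ B_Λ)) for all h ∈ H. -/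
/-!
Write `Γᵢ = mᵢ Θᵢ`, so that `⟪M f, g⟫ = ∑ ⟪Γᵢ f, Λᵢ g⟫`. Splitting `Γᵢ = Λᵢ + (Γᵢ - Λᵢ)` gives
`⟪M f, f⟫ = ∑ ‖Λᵢ f‖² + ∑ ⟪(Γᵢ - Λᵢ) f, Λᵢ f⟫`, and Cauchy–Schwarz in `ℓ²` bounds the second sum by
`√μ √B ‖f‖²`. Hence `re ⟪M f, f⟫ ≥ (A - √(μB)) ‖f‖²` with `A - √(μB) > 0`: `M` is coercive, so it
is invertible with `‖M⁻¹‖ ≤ 1 / (A - √(μB))`. Minkowski's inequality makes `Γ` a g-Bessel family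
with bound `(√B + √μ)²`, which gives `‖M‖ ≤ B + √(μB)`, and coercivity combined with Cauchy–Schwarz
gives the lower frame bound `(A - √(μB))² / B` for `Γ`.
-/

open ContinuousLinearMap
local notation "⟪" x ", " y "⟫" => @inner ℂ _ _ x y

section SquareSummable

variable {J : Type*}

theorem hasSum_rpow_two_of_hasSum_sq {a : J → ℝ} {s : ℝ} (ha : HasSum (fun i => a i ^ 2) s) :
    HasSum (fun i => a i ^ (2 : ℝ)) (√s ^ (2 : ℝ)) := by
  simpa only [Real.rpow_two, Real.sq_sqrt (ha.nonneg fun i => sq_nonneg _)] using ha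

theorem exists_hasSum_inner_norm_le_sqrt_mul_sqrt {𝕜 : Type*} [RCLike 𝕜] {E : J → Type*}
    [∀ i, SeminormedAddCommGroup (E i)] [∀ i, InnerProductSpace 𝕜 (E i)] {x y : ∀ i, E i}
    {s t : ℝ} (hx : HasSum (fun i => ‖x i‖ ^ 2) s) (hy : HasSum (fun i => ‖y i‖ ^ 2) t) :
    ∃ z : 𝕜, HasSum (fun i => inner 𝕜 (x i) (y i)) z ∧ ‖z‖ ≤ √s * √t := by
  obtain ⟨C, -, hC, hsum⟩ := Real.inner_le_Lp_mul_Lq_hasSum_of_nonneg .two_two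
    (Real.sqrt_nonneg s) (Real.sqrt_nonneg t) (fun i => norm_nonneg (x i))
    (fun i => norm_nonneg (y i)) (hasSum_rpow_two_of_hasSum_sq hx) (hasSum_rpow_two_of_hasSum_sq hy)
  have hbound : ∀ i, ‖inner 𝕜 (x i) (y i)‖ ≤ ‖x i‖ * ‖y i‖ := fun i => norm_inner_le_norm _ _
  have hinner := (hsum.summable.of_norm_bounded hbound).hasSum
  exact ⟨_, hinner, (hinner.norm_le_of_bounded hsum hbound).trans hC⟩

theorem exists_hasSum_norm_add_sq_sqrt_le {E : J → Type*} [∀ i, SeminormedAddCommGroup (E i)]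
    {x y : ∀ i, E i} {s t : ℝ} (hx : HasSum (fun i => ‖x i‖ ^ 2) s)
    (hy : HasSum (fun i => ‖y i‖ ^ 2) t) :
    ∃ u, HasSum (fun i => ‖x i + y i‖ ^ 2) u ∧ √u ≤ √s + √t := by
  obtain ⟨C, hC0, hC, hsum⟩ := Real.Lp_add_le_hasSum_of_nonneg one_le_two
    (fun i => norm_nonneg (x i)) (fun i => norm_nonneg (y i)) (Real.sqrt_nonneg s)
    (Real.sqrt_nonneg t) (hasSum_rpow_two_of_hasSum_sq hx) (hasSum_rpow_two_of_hasSum_sq hy)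
  simp only [Real.rpow_two] at hsum
  have hbound : ∀ i, ‖x i + y i‖ ^ 2 ≤ (‖x i‖ + ‖y i‖) ^ 2 := fun i =>
    pow_le_pow_left₀ (norm_nonneg _) (norm_add_le _ _) 2
  have hadd := (hsum.summable.of_nonneg_of_le (fun i => sq_nonneg _) hbound).hasSum
  refine ⟨_, hadd, ?_⟩
  calc √(∑' i, ‖x i + y i‖ ^ 2) ≤ √(C ^ 2) := Real.sqrt_le_sqrt (hasSum_le hbound hadd hsum)
    _ = C := Real.sqrt_sq hC0
    _ ≤ √s + √t := hC

end SquareSummable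

section GFrame

variable {𝕜 H J : Type*} [NormedField 𝕜] [SeminormedAddCommGroup H] [NormedSpace 𝕜 H]
  {E : J → Type*} [∀ i, SeminormedAddCommGroup (E i)] [∀ i, NormedSpace 𝕜 (E i)]

def IsGBessel (T : ∀ i, H →L[𝕜] E i) (B : ℝ) : Prop :=
  ∀ f, ∃ s, HasSum (fun i => ‖T i f‖ ^ 2) s ∧ s ≤ B * ‖f‖ ^ 2

def IsGFrame (T : ∀ i, H →L[𝕜] E i) (A B : ℝ) : Prop :=
  ∀ f, ∃ s, HasSum (fun i => ‖T i f‖ ^ 2) s ∧ A * ‖f‖ ^ 2 ≤ s ∧ s ≤ B * ‖f‖ ^ 2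

theorem IsGFrame.isGBessel {T : ∀ i, H →L[𝕜] E i} {A B : ℝ} (hT : IsGFrame T A B) :
    IsGBessel T B := fun f =>
  let ⟨s, hs, _, hsB⟩ := hT f
  ⟨s, hs, hsB⟩

theorem IsGBessel.sqrt_le {T : ∀ i, H →L[𝕜] E i} {B s : ℝ} (hT : IsGBessel T B) {f : H}
    (hs : HasSum (fun i => ‖T i f‖ ^ 2) s) : √s ≤ √B * ‖f‖ := by
  obtain ⟨s', hs', hs'B⟩ := hT f
  rw [hs.unique hs', ← Real.sqrt_sq (norm_nonneg f), ← Real.sqrt_mul' _ (sq_nonneg _)]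
  exact Real.sqrt_le_sqrt hs'B

theorem IsGBessel.add {T S : ∀ i, H →L[𝕜] E i} {B C : ℝ} (hT : IsGBessel T B)
    (hS : IsGBessel S C) : IsGBessel (fun i => T i + S i) ((√B + √C) ^ 2) := by
  intro f
  obtain ⟨s, hs, -⟩ := hT f
  obtain ⟨t, ht, -⟩ := hS f
  obtain ⟨u, hu, hut⟩ := exists_hasSum_norm_add_sq_sqrt_le hs ht
  refine ⟨u, hu, ?_⟩
  have hsqrt : √u ≤ (√B + √C) * ‖f‖ := by
    linarith [hT.sqrt_le hs, hS.sqrt_le ht]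
  rwa [Real.sqrt_le_left (by positivity), mul_pow] at hsqrt

end GFrame

section Multiplier

variable {𝕜 H J : Type*} [RCLike 𝕜] [NormedAddCommGroup H] [InnerProductSpace 𝕜 H]
  [CompleteSpace H] {E : J → Type*} [∀ i, NormedAddCommGroup (E i)]
  [∀ i, InnerProductSpace 𝕜 (E i)] [∀ i, CompleteSpace (E i)]
  {Λ Γ : ∀ i, H →L[𝕜] E i} {M : H →L[𝕜] H}

/-- The paper's multiplier `M_{m,Λ,Θ}` is the case `Γᵢ = mᵢ Θᵢ`. -/
def IsGMultiplier (Λ Γ : ∀ i, H →L[𝕜] E i) (M : H →L[𝕜] H) : Prop :=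
  ∀ f, HasSum (fun i => adjoint (Λ i) (Γ i f)) (M f)

theorem IsGMultiplier.hasSum_inner (hM : IsGMultiplier Λ Γ M) (f g : H) :
    HasSum (fun i => inner 𝕜 (Γ i f) (Λ i g)) (inner 𝕜 (M f) g) := by
  have h := ((hM f).mapL (innerSL 𝕜 g)).star
  simp only [innerSL_apply_apply, RCLike.star_def, inner_conj_symm] at h
  simpa only [adjoint_inner_left] using h

theorem IsGMultiplier.norm_inner_le (hM : IsGMultiplier Λ Γ M) {f g : H} {s t : ℝ}
    (hs : HasSum (fun i => ‖Γ i f‖ ^ 2) s) (ht : HasSum (fun i => ‖Λ i g‖ ^ 2) t) :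
    ‖inner 𝕜 (M f) g‖ ≤ √s * √t := by
  obtain ⟨z, hz, hzle⟩ := exists_hasSum_inner_norm_le_sqrt_mul_sqrt (𝕜 := 𝕜) hs ht
  rwa [(hM.hasSum_inner f g).unique hz]

theorem IsGMultiplier.norm_apply_le (hM : IsGMultiplier Λ Γ M) {K B : ℝ}
    (hΓ : IsGBessel Γ K) (hΛ : IsGBessel Λ B) (f : H) : ‖M f‖ ≤ √K * √B * ‖f‖ := by
  obtain ⟨s, hs, -⟩ := hΓ f
  obtain ⟨t, ht, -⟩ := hΛ (M f)
  have hsq : ‖M f‖ ^ 2 ≤ √K * √B * ‖f‖ * ‖M f‖ :=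
    calc ‖M f‖ ^ 2 = ‖inner 𝕜 (M f) (M f)‖ := by rw [inner_self_eq_norm_sq_to_K]; simp
      _ ≤ √s * √t := hM.norm_inner_le hs ht
      _ ≤ (√K * ‖f‖) * (√B * ‖M f‖) :=
        mul_le_mul (hΓ.sqrt_le hs) (hΛ.sqrt_le ht) (Real.sqrt_nonneg _) (by positivity)
      _ = √K * √B * ‖f‖ * ‖M f‖ := by ring
  have : 0 ≤ √K * √B * ‖f‖ := by positivity
  nlinarith [norm_nonneg (M f)]

theorem IsGMultiplier.mul_norm_sq_le_re_inner (hM : IsGMultiplier Λ Γ M) {A B μ : ℝ}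
    (hΛ : IsGFrame Λ A B) (hD : IsGBessel (fun i => Γ i - Λ i) μ) (f : H) :
    (A - √μ * √B) * ‖f‖ ^ 2 ≤ RCLike.re (inner 𝕜 (M f) f) := by
  obtain ⟨s, hs, hAs, -⟩ := hΛ f
  obtain ⟨d, hd, -⟩ := hD f
  obtain ⟨z, hz, hzle⟩ := exists_hasSum_inner_norm_le_sqrt_mul_sqrt (𝕜 := 𝕜) hd hs
  -- `⟪Γ f, Λ f⟫ = ‖Λ f‖² + ⟪(Γ - Λ) f, Λ f⟫` termwise
  have hsplit : inner 𝕜 (M f) f = (s : 𝕜) + z := by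
    refine (hM.hasSum_inner f f).unique ?_
    convert (hs.mapL RCLike.ofRealCLM).add hz using 2 with i
    · simp [← inner_self_eq_norm_sq_to_K, ← inner_add_left]
    · simp
  have hzbound : ‖z‖ ≤ √μ * √B * ‖f‖ ^ 2 :=
    calc ‖z‖ ≤ √d * √s := hzle
      _ ≤ (√μ * ‖f‖) * (√B * ‖f‖) :=
        mul_le_mul (hD.sqrt_le hd) (hΛ.isGBessel.sqrt_le hs) (Real.sqrt_nonneg _) (by positivity)
      _ = √μ * √B * ‖f‖ ^ 2 := by ring
  rw [hsplit, map_add, RCLike.ofReal_re]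
  linarith [neg_le_of_abs_le (RCLike.abs_re_le_norm z)]

theorem IsGMultiplier.isGFrame_of_mul_norm_sq_le_re_inner (hM : IsGMultiplier Λ Γ M)
    {K B c : ℝ} (hΓ : IsGBessel Γ K) (hΛ : IsGBessel Λ B) (hB : 0 < B) (hc : 0 ≤ c)
    (hcoer : ∀ f, c * ‖f‖ ^ 2 ≤ RCLike.re (inner 𝕜 (M f) f)) : IsGFrame Γ (c ^ 2 / B) K := by
  intro f
  obtain ⟨s, hs, hsK⟩ := hΓ f
  obtain ⟨t, ht, -⟩ := hΛ f
  refine ⟨s, hs, ?_, hsK⟩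
  have hle : c * ‖f‖ * ‖f‖ ≤ √s * √B * ‖f‖ :=
    calc c * ‖f‖ * ‖f‖ = c * ‖f‖ ^ 2 := by ring
      _ ≤ RCLike.re (inner 𝕜 (M f) f) := hcoer f
      _ ≤ ‖inner 𝕜 (M f) f‖ := RCLike.re_le_norm _
      _ ≤ √s * √t := hM.norm_inner_le hs ht
      _ ≤ √s * (√B * ‖f‖) := by gcongr; exact hΛ.sqrt_le ht
      _ = √s * √B * ‖f‖ := by ring
  have hroot : c * ‖f‖ ≤ √s * √B := by
    rcases (norm_nonneg f).eq_or_lt with hf | hf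
    · rw [← hf, mul_zero]; positivity
    · exact le_of_mul_le_mul_right hle hf
  have hsq := pow_le_pow_left₀ (by positivity) hroot 2
  rw [mul_pow, mul_pow, Real.sq_sqrt (hs.nonneg fun i => sq_nonneg _), Real.sq_sqrt hB.le] at hsq
  rw [div_mul_eq_mul_div, div_le_iff₀ hB, ← mul_pow]
  linarith

end Multiplier

section Coercive

variable {𝕜 H : Type*} [RCLike 𝕜] [NormedAddCommGroup H] [InnerProductSpace 𝕜 H]

theorem mul_norm_le_norm_apply_of_re_inner {T : H →L[𝕜] H} {c : ℝ}
    (hT : ∀ f, c * ‖f‖ ^ 2 ≤ RCLike.re (inner 𝕜 (T f) f)) (f : H) : c * ‖f‖ ≤ ‖T f‖ := by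
  rcases (norm_nonneg f).eq_or_lt with hf | hf
  · rw [← hf, mul_zero]; exact norm_nonneg _
  refine le_of_mul_le_mul_right ?_ hf
  calc c * ‖f‖ * ‖f‖ = c * ‖f‖ ^ 2 := by ring
    _ ≤ RCLike.re (inner 𝕜 (T f) f) := hT f
    _ ≤ ‖inner 𝕜 (T f) f‖ := RCLike.re_le_norm _
    _ ≤ ‖T f‖ * ‖f‖ := norm_inner_le_norm _ _

theorem exists_inverse_norm_bounds_of_re_inner [CompleteSpace H] {T : H →L[𝕜] H} {c C : ℝ}
    (hc : 0 < c) (hC : 0 < C) (hT : ∀ f, c * ‖f‖ ^ 2 ≤ RCLike.re (inner 𝕜 (T f) f))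
    (hTC : ∀ f, ‖T f‖ ≤ C * ‖f‖) :
    ∃ S : H →L[𝕜] H, T * S = 1 ∧ S * T = 1 ∧
      ∀ h, ‖h‖ / C ≤ ‖S h‖ ∧ ‖S h‖ ≤ ‖h‖ / c := by
  have hunit : IsUnit T := isUnit_of_forall_le_norm_inner_map T (c := ⟨c, hc.le⟩) hc fun f =>
    calc ‖f‖ ^ 2 * c = c * ‖f‖ ^ 2 := mul_comm _ _
      _ ≤ RCLike.re (inner 𝕜 (T f) f) := hT f
      _ ≤ ‖inner 𝕜 (T f) f‖ := RCLike.re_le_norm _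
  obtain ⟨u, rfl⟩ := hunit
  refine ⟨_, u.mul_inv, u.inv_mul, fun h => ?_⟩
  set g := (↑u⁻¹ : H →L[𝕜] H) h
  have hinv : (u : H →L[𝕜] H) g = h := DFunLike.congr_fun u.mul_inv h
  constructor
  · rw [div_le_iff₀ hC, mul_comm, ← hinv]
    exact hTC g
  · rw [le_div_iff₀ hc, mul_comm, ← hinv]
    exact mul_norm_le_norm_apply_of_re_inner hT g

end Coercive

theorem stmt11 {H : Type*} [NormedAddCommGroup H] [InnerProductSpace ℂ H] [CompleteSpace H]
    {J : Type*} {Hi : J → Type*} [∀ i, NormedAddCommGroup (Hi i)]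
    [∀ i, InnerProductSpace ℂ (Hi i)] [∀ i, CompleteSpace (Hi i)]
    (Λ Θ : ∀ i, H →L[ℂ] Hi i) (m : J → ℂ) (AΛ BΛ μ : ℝ) (hAΛ : 0 < AΛ)
    (hΛ : ∀ f : H, ∃ s : ℝ, HasSum (fun i => ‖Λ i f‖ ^ 2) s ∧
      AΛ * ‖f‖ ^ 2 ≤ s ∧ s ≤ BΛ * ‖f‖ ^ 2)
    (hμ0 : 0 ≤ μ) (hμ : μ < AΛ ^ 2 / BΛ)
    (hperturb : ∀ f : H, ∃ s : ℝ,
      HasSum (fun i => ‖m i • Θ i f - Λ i f‖ ^ 2) s ∧ s ≤ μ * ‖f‖ ^ 2)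
    (M : H →L[ℂ] H)
    (hM : ∀ f : H, HasSum (fun i => m i • adjoint (Λ i) (Θ i f)) (M f)) :
    (∃ A B : ℝ, 0 < A ∧ ∀ f : H, ∃ s : ℝ,
      HasSum (fun i => ‖m i‖ ^ 2 * ‖Θ i f‖ ^ 2) s ∧ A * ‖f‖ ^ 2 ≤ s ∧ s ≤ B * ‖f‖ ^ 2) ∧
    ∃ Minv : H →L[ℂ] H, M * Minv = 1 ∧ Minv * M = 1 ∧
      ∀ h : H, ‖h‖ / (BΛ + Real.sqrt (μ * BΛ)) ≤ ‖Minv h‖ ∧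
        ‖Minv h‖ ≤ ‖h‖ / (AΛ - Real.sqrt (μ * BΛ)) := by
  have hframe : IsGFrame Λ AΛ BΛ := hΛ
  have hB : 0 < BΛ := by
    by_contra! hB
    linarith [div_nonpos_of_nonneg_of_nonpos (sq_nonneg AΛ) hB]
  have hgap : √μ * √BΛ < AΛ := by
    rw [← Real.sqrt_mul hμ0, Real.sqrt_lt' hAΛ]
    exact (lt_div_iff₀ hB).mp hμ
  set Γ : ∀ i, H →L[ℂ] Hi i := fun i => m i • Θ i
  have hMΓ : IsGMultiplier Λ Γ M := fun f => by
    simpa only [Γ, smul_apply, map_smul] using hM f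
  have hD : IsGBessel (fun i => Γ i - Λ i) μ := hperturb
  have hΓ : IsGBessel Γ ((√BΛ + √μ) ^ 2) := by
    simpa only [add_sub_cancel] using hframe.isGBessel.add hD
  have hcoer := hMΓ.mul_norm_sq_le_re_inner hframe hD
  have hΓframe : IsGFrame Γ ((AΛ - √μ * √BΛ) ^ 2 / BΛ) ((√BΛ + √μ) ^ 2) :=
    hMΓ.isGFrame_of_mul_norm_sq_le_re_inner hΓ hframe.isGBessel hB (sub_pos.2 hgap).le hcoer
  refine ⟨⟨_, (√BΛ + √μ) ^ 2, div_pos (pow_pos (sub_pos.2 hgap) 2) hB, fun f => ?_⟩, ?_⟩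
  · obtain ⟨s, hs, hle⟩ := hΓframe f
    exact ⟨s, by simpa only [Γ, smul_apply, norm_smul, mul_pow] using hs, hle⟩
  · have hbound : ∀ f, ‖M f‖ ≤ (BΛ + √μ * √BΛ) * ‖f‖ := fun f => by
      convert hMΓ.norm_apply_le hΓ hframe.isGBessel f using 2
      rw [Real.sqrt_sq (by positivity), add_mul, Real.mul_self_sqrt hB.le]
    rw [Real.sqrt_mul hμ0]
    exact exists_inverse_norm_bounds_of_re_inner (sub_pos.2 hgap) (by positivity) hcoer hbound
end
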